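/- arXiv:2505.22357 — 4 statements merged into one kernel-verified Lean document; each statement's English description precedes it below -/
import Mathlib

section
/- Let F be a nonarchimedean local field, f = X^2 - dX - c ∈ O_F[X] with reduction mod P_F irreducible over k_F, and let β_f ∈ GL(2N, F) be the 2N×2N matrix with (1,2N)-entry cϖ^{-2}, (N+1, 2N)-entry dϖ^{-1}, (i+1,i)-entries 1 for 1 ≤ i < 2N, and zeros elsewhere. Then β_f^N · ϖ is a root of X^2 - dX - c, i.e. (β_f^N ϖ)^2 = d·(β_f^N ϖ) + c·I_{2N}. -/
open Polynomial Matrix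

set_option maxHeartbeats 1000000 in
/-- Let `f = X² - dX - c ∈ O[X]` reduce to an irreducible polynomial over the residue
field, and let `β_f` be the `2N×2N` matrix with `(1,2N)`-entry `cϖ⁻²`, `(N+1,2N)`-entry
`dϖ⁻¹`, subdiagonal entries `1`, zeros elsewhere. Then `β_f^N · ϖ` is a root of
`X² - dX - c`, i.e. `(β_f^N ϖ)² = d·(β_f^N ϖ) + c·I`. -/
theorem stmt4 (O F : Type*) [CommRing O] [IsDomain O] [IsDiscreteValuationRing O]
    [Field F] [Algebra O F] [IsFractionRing O F]
    (ϖ : O) (hϖ : Irreducible ϖ) (c d : O)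
    (hf : Irreducible ((X ^ 2 - C d * X - C c).map (IsLocalRing.residue O)))
    (N : ℕ) (hN : 2 ≤ N)
    (βf : Matrix (Fin (2 * N)) (Fin (2 * N)) F)
    (hβf : βf = Matrix.of fun i j =>
      if i.val = 0 ∧ j.val = 2 * N - 1 then
        algebraMap O F c * ((algebraMap O F ϖ)⁻¹) ^ 2
      else if i.val = N ∧ j.val = 2 * N - 1 then
        algebraMap O F d * (algebraMap O F ϖ)⁻¹
      else if i.val = j.val + 1 then 1 else 0) :
    (algebraMap O F ϖ • βf ^ N) ^ 2 =
      algebraMap O F d • (algebraMap O F ϖ • βf ^ N) +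
        algebraMap O F c • (1 : Matrix (Fin (2 * N)) (Fin (2 * N)) F) := by
  subst hβf
  set cF := algebraMap O F c with hcF
  set dF := algebraMap O F d with hdF
  set pF := algebraMap O F ϖ with hpF
  have hp0 : pF ≠ 0 := by
    simpa [hpF, map_eq_zero_iff _ (IsFractionRing.injective O F)] using hϖ.ne_zero
  have hP : ∀ k : ℕ, k ≤ N →
      (Matrix.of fun i j : Fin (2 * N) =>
        if i.val = 0 ∧ j.val = 2 * N - 1 then cF * pF⁻¹ ^ 2
        else if i.val = N ∧ j.val = 2 * N - 1 then dF * pF⁻¹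
        else if i.val = j.val + 1 then (1 : F) else 0) ^ k =
      Matrix.of (fun i j : Fin (2 * N) =>
        if i.val = j.val + k then (1 : F)
        else if j.val + k = i.val + 2 * N then cF * pF⁻¹ ^ 2
        else if 2 * N ≤ j.val + k ∧ j.val + k = i.val + N then dF * pF⁻¹
        else 0) := by
    intro k hk
    induction k with
    | zero =>
      ext i j
      have hj := j.isLt
      simp only [pow_zero, Matrix.one_apply, Matrix.of_apply, Nat.add_zero, Fin.ext_iff]
      split_ifs <;> first | rfl | (exfalso; omega)
    | succ k ih =>
      have hkN : k < N := hk
      rw [pow_succ, ih (le_of_lt hkN)]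
      ext i j
      rw [Matrix.mul_apply]
      have hi := i.isLt
      have hj := j.isLt
      by_cases hjl : (j : ℕ) = 2 * N - 1
      · have h0 : 0 < 2 * N := by omega
        have hN2 : N < 2 * N := by omega
        rw [Fintype.sum_eq_add (⟨0, h0⟩ : Fin (2 * N)) (⟨N, hN2⟩ : Fin (2 * N))
          (by simp only [ne_eq, Fin.mk.injEq]; omega)
          (fun x hx => by
            have hx1 : (x : ℕ) ≠ 0 := by simpa [Fin.ext_iff] using hx.1
            have hx2 : (x : ℕ) ≠ N := by simpa [Fin.ext_iff] using hx.2
            have hxl := x.isLt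
            simp only [Matrix.of_apply]
            have hz : (if (x : ℕ) = 0 ∧ (j : ℕ) = 2 * N - 1 then cF * pF⁻¹ ^ 2
                else if (x : ℕ) = N ∧ (j : ℕ) = 2 * N - 1 then dF * pF⁻¹
                else if (x : ℕ) = (j : ℕ) + 1 then (1 : F) else 0) = 0 := by
              rw [if_neg (by omega), if_neg (by omega), if_neg (by omega)]
            rw [hz, mul_zero])]
        have e0 : ((⟨0, h0⟩ : Fin (2 * N)) : ℕ) = 0 := rfl
        have eN : ((⟨N, hN2⟩ : Fin (2 * N)) : ℕ) = N := rfl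
        simp only [Matrix.of_apply, e0, eN]
        rw [if_pos (show True ∧ (j : ℕ) = 2 * N - 1 from ⟨trivial, hjl⟩),
          if_neg (show ¬(N = 0 ∧ (j : ℕ) = 2 * N - 1) by omega),
          if_pos (show True ∧ (j : ℕ) = 2 * N - 1 from ⟨trivial, hjl⟩),
          if_neg (show ¬(0 + k = (i : ℕ) + 2 * N) by omega),
          if_neg (show ¬(2 * N ≤ 0 + k ∧ 0 + k = (i : ℕ) + N) by omega),
          if_neg (show ¬(N + k = (i : ℕ) + 2 * N) by omega),
          if_neg (show ¬(2 * N ≤ N + k ∧ N + k = (i : ℕ) + N) by omega)]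
        split_ifs <;> first | (exfalso; omega) | ring
      · have hjlt : (j : ℕ) + 1 < 2 * N := by omega
        rw [Fintype.sum_eq_single (⟨(j : ℕ) + 1, hjlt⟩ : Fin (2 * N))
          (fun x hx => by
            have hx1 : (x : ℕ) ≠ (j : ℕ) + 1 := by simpa [Fin.ext_iff] using hx
            have hxl := x.isLt
            simp only [Matrix.of_apply]
            have hz : (if (x : ℕ) = 0 ∧ (j : ℕ) = 2 * N - 1 then cF * pF⁻¹ ^ 2
                else if (x : ℕ) = N ∧ (j : ℕ) = 2 * N - 1 then dF * pF⁻¹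
                else if (x : ℕ) = (j : ℕ) + 1 then (1 : F) else 0) = 0 := by
              rw [if_neg (by omega), if_neg (by omega), if_neg (by omega)]
            rw [hz, mul_zero])]
        have ej : ((⟨(j : ℕ) + 1, hjlt⟩ : Fin (2 * N)) : ℕ) = (j : ℕ) + 1 := rfl
        simp only [Matrix.of_apply, ej]
        rw [if_neg (show ¬((j : ℕ) + 1 = 0 ∧ (j : ℕ) = 2 * N - 1) by omega),
          if_neg (show ¬((j : ℕ) + 1 = N ∧ (j : ℕ) = 2 * N - 1) by omega)]
        rw [if_pos trivial, mul_one]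
        split_ifs <;> first | rfl | (exfalso; omega)
  rw [hP N le_rfl, pow_two]
  ext i j
  have hi := i.isLt
  have hj := j.isLt
  simp only [Matrix.mul_apply, Matrix.smul_apply, Matrix.add_apply, Matrix.one_apply,
    Matrix.of_apply, smul_eq_mul, Fin.ext_iff]
  by_cases hiN : (i : ℕ) < N
  · have hlt : (i : ℕ) + N < 2 * N := by omega
    rw [Fintype.sum_eq_single (⟨(i : ℕ) + N, hlt⟩ : Fin (2 * N))
      (fun x hx => by
        have hx1 : (x : ℕ) ≠ (i : ℕ) + N := by simpa [Fin.ext_iff] using hx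
        have hxl := x.isLt
        have hz : (if (i : ℕ) = (x : ℕ) + N then (1 : F)
            else if (x : ℕ) + N = (i : ℕ) + 2 * N then cF * pF⁻¹ ^ 2
            else if 2 * N ≤ (x : ℕ) + N ∧ (x : ℕ) + N = (i : ℕ) + N then dF * pF⁻¹
            else 0) = 0 := by
          rw [if_neg (by omega), if_neg (by omega), if_neg (by omega)]
        rw [hz, mul_zero, zero_mul])]
    have e1 : ((⟨(i : ℕ) + N, hlt⟩ : Fin (2 * N)) : ℕ) = (i : ℕ) + N := rfl
    simp only [e1]
    rw [if_neg (show ¬((i : ℕ) = (i : ℕ) + N + N) by omega),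
      if_pos (show (i : ℕ) + N + N = (i : ℕ) + 2 * N by omega),
      if_neg (show ¬((j : ℕ) + N = (i : ℕ) + N + 2 * N) by omega),
      if_neg (show ¬((i : ℕ) = (j : ℕ) + N) by omega),
      if_neg (show ¬(2 * N ≤ (j : ℕ) + N ∧ (j : ℕ) + N = (i : ℕ) + N) by omega)]
    split_ifs <;> first | (exfalso; omega) | (field_simp; try ring)
  · have hlt : (i : ℕ) - N < 2 * N := by omega
    rw [Fintype.sum_eq_add (⟨(i : ℕ) - N, hlt⟩ : Fin (2 * N)) i
      (by simp only [ne_eq, Fin.ext_iff]; omega)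
      (fun x hx => by
        have hx1 : (x : ℕ) ≠ (i : ℕ) - N := by simpa [Fin.ext_iff] using hx.1
        have hx2 : (x : ℕ) ≠ (i : ℕ) := by simpa [Fin.ext_iff] using hx.2
        have hxl := x.isLt
        have hz : (if (i : ℕ) = (x : ℕ) + N then (1 : F)
            else if (x : ℕ) + N = (i : ℕ) + 2 * N then cF * pF⁻¹ ^ 2
            else if 2 * N ≤ (x : ℕ) + N ∧ (x : ℕ) + N = (i : ℕ) + N then dF * pF⁻¹
            else 0) = 0 := by
          rw [if_neg (by omega), if_neg (by omega), if_neg (by omega)]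
        rw [hz, mul_zero, zero_mul])]
    have e1 : ((⟨(i : ℕ) - N, hlt⟩ : Fin (2 * N)) : ℕ) = (i : ℕ) - N := rfl
    simp only [e1]
    rw [if_pos (show (i : ℕ) = (i : ℕ) - N + N by omega),
      if_neg (show ¬((i : ℕ) = (i : ℕ) + N) by omega),
      if_neg (show ¬((i : ℕ) + N = (i : ℕ) + 2 * N) by omega),
      if_pos (show 2 * N ≤ (i : ℕ) + N ∧ True from ⟨by omega, trivial⟩),
      if_neg (show ¬((i : ℕ) - N = (j : ℕ) + N) by omega),
      if_neg (show ¬(2 * N ≤ (j : ℕ) + N ∧ (j : ℕ) + N = (i : ℕ) - N + N) by omega),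
      if_neg (show ¬((j : ℕ) + N = (i : ℕ) + 2 * N) by omega)]
    split_ifs <;> first | (exfalso; omega) | (field_simp; try ring)
end

section
/- Let L be the unramified quadratic extension of a nonarchimedean local field F with residue field k_F of cardinality q. Then the unit group O_L^× of the ring of integers of L is (topologically) generated by elements of the form 1 + u'σ with u' ∈ O_F^×, where σ ∈ O_L is a fixed element whose image generates the residue field k_L over k_F. More precisely, the images of the elements 1 + u'σ (u' ∈ O_F^×) in k_L^× = O_L^×/(1+P_L) generate k_L^×. -/
/-- Let `L/K` be the quadratic extension of finite fields (the residue situation of an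
unramified quadratic extension of local fields), and let `σ ∈ L` not lie in `K`
(so its class generates `L` over `K`). Then the elements `1 + uσ`, for `u` ranging over
`K^×`, generate the multiplicative group `L^×`. -/
theorem stmt7 (K L : Type*) [Field K] [Field L] [Algebra K L] [Finite L]
    (hdim : Module.finrank K L = 2) (σ : L)
    (hσ : σ ∉ Set.range (algebraMap K L)) :
    Subgroup.closure {x : Lˣ | ∃ u : Kˣ, (x : L) = 1 + algebraMap K L u * σ} = ⊤ := by
  classical
  have hKfin : Finite K := Finite.of_injective _ (algebraMap K L).injective
  have : Fintype L := Fintype.ofFinite L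
  have : Fintype K := Fintype.ofFinite K
  have hfd : FiniteDimensional K L := inferInstance
  set ι : K →+* L := algebraMap K L with hιdef
  have hinj : Function.Injective ι := ι.injective
  set q : ℕ := Fintype.card K with hqdef
  have hq2 : 2 ≤ q := Fintype.one_lt_card
  have hcardL : Fintype.card L = q ^ 2 := by
    rw [Module.card_eq_pow_finrank (K := K) (V := L), hdim]
  -- the range of ι is the fixed field of the q-power map
  have hrfwd : ∀ a : K, (ι a) ^ q = ι a := by
    intro a; rw [← map_pow, hqdef, FiniteField.pow_card]
  have hrange : ∀ x : L, x ∈ Set.range ι ↔ x ^ q = x := by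
    intro x
    constructor
    · rintro ⟨a, rfl⟩; exact hrfwd a
    · intro hx
      by_contra hxr
      set A : Finset L := insert 0 (Polynomial.nthRoots (q - 1) (1 : L)).toFinset with hA
      have hmem : ∀ z : L, z ^ q = z → z ∈ A := by
        intro z hz
        rcases eq_or_ne z 0 with rfl | hz0
        · exact Finset.mem_insert_self _ _
        · refine Finset.mem_insert_of_mem ?_
          rw [Multiset.mem_toFinset, Polynomial.mem_nthRoots (by omega)]
          have h1 : z ^ (q - 1) * z = 1 * z := by
            rw [← pow_succ, Nat.sub_add_cancel (by omega), hz, one_mul]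
          exact mul_right_cancel₀ hz0 h1
      have hsub : insert x (Finset.univ.image ι) ⊆ A := by
        intro z hz
        rcases Finset.mem_insert.1 hz with rfl | hz
        · exact hmem z hx
        · obtain ⟨a, _, rfl⟩ := Finset.mem_image.1 hz
          exact hmem _ (hrfwd a)
      have hcard1 : (insert x (Finset.univ.image ι)).card = q + 1 := by
        rw [Finset.card_insert_of_notMem, Finset.card_image_of_injective _ hinj,
          Finset.card_univ]
        intro hmem'
        obtain ⟨a, _, ha⟩ := Finset.mem_image.1 hmem'
        exact hxr ⟨a, ha⟩
      have hcard2 : A.card ≤ q := by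
        calc A.card ≤ (Polynomial.nthRoots (q - 1) (1 : L)).toFinset.card + 1 :=
              Finset.card_insert_le _ _
          _ ≤ (q - 1) + 1 := by
              have h1 := Multiset.toFinset_card_le (Polynomial.nthRoots (q - 1) (1 : L))
              have h2 := Polynomial.card_nthRoots (q - 1) (1 : L)
              omega
          _ = q := by omega
      have := Finset.card_le_card hsub
      omega
  -- Frobenius is additive
  obtain ⟨p, hp⟩ := CharP.exists K
  haveI := hp
  obtain ⟨nn, hpprime, hqpn⟩ := FiniteField.card K p
  haveI : CharP L p := charP_of_injective_algebraMap hinj p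
  haveI : ExpChar L p := ExpChar.prime hpprime
  have hfrob : ∀ x y : L, (x + y) ^ q = x ^ q + y ^ q := by
    intro x y
    have h1 := map_add (iterateFrobenius L p nn) x y
    rw [iterateFrobenius_def, iterateFrobenius_def, iterateFrobenius_def] at h1
    rw [hqdef, hqpn]
    exact h1
  -- σ facts
  have hσ0 : σ ≠ 0 := fun h => hσ ⟨0, by simp [h]⟩
  set τ : L := σ ^ q with hτdef
  have hLpow : ∀ x : L, x ^ (q * q) = x := by
    intro x
    have h1 : x ^ Fintype.card L = x := FiniteField.pow_card x
    rw [hcardL, pow_two] at h1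
    exact h1
  have hτq : τ ^ q = σ := by rw [hτdef, ← pow_mul, hLpow]
  obtain ⟨t, ht⟩ : σ + τ ∈ Set.range ι := (hrange _).2 (by rw [hfrob, hτq]; ring)
  obtain ⟨nm, hnm⟩ : σ * τ ∈ Set.range ι := (hrange _).2 (by rw [mul_pow, hτq]; ring)
  have hτ0 : τ ≠ 0 := pow_ne_zero _ hσ0
  have hnm0 : nm ≠ 0 := by
    intro h
    exact mul_ne_zero hσ0 hτ0 (by rw [← hnm, h, map_zero])
  have hιnm : ι nm ≠ 0 := fun h => hnm0 (hinj (by rw [h, map_zero]))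
  -- 1 + uσ is nonzero
  have hone : ∀ u : K, (1 : L) + ι u * σ ≠ 0 := by
    intro u h
    rcases eq_or_ne u 0 with rfl | hu
    · simp at h
    · have hιu : ι u ≠ 0 := fun h0 => hu (hinj (by rw [h0, map_zero]))
      refine hσ ⟨-u⁻¹, ?_⟩
      rw [map_neg, map_inv₀]
      field_simp
      linear_combination -h
  -- norm computation
  have hpowq : ∀ u : K, (1 + ι u * σ) ^ q = 1 + ι u * τ := by
    intro u
    rw [hfrob, one_pow, mul_pow, hrfwd, hτdef]
  set F : K → K := fun u => 1 + u * t + u ^ 2 * nm with hFdef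
  have hnorm : ∀ u : K, (1 + ι u * σ) ^ (q + 1) = ι (F u) := by
    intro u
    rw [pow_succ, hpowq]
    have : ι (F u) = 1 + ι u * (σ + τ) + (ι u) ^ 2 * (σ * τ) := by
      rw [hFdef]
      simp only [map_add, map_mul, map_one, map_pow, ht, hnm]
    rw [this]; ring
  have hF0 : ∀ u : K, F u ≠ 0 := by
    intro u h
    apply hone u
    have h1 : (1 + ι u * σ) ^ (q + 1) = 0 := by rw [hnorm, h, map_zero]
    exact pow_eq_zero_iff (by omega) |>.1 h1
  have hF2 : ∀ u v : K, F u = F v → v = u ∨ v = -(t / nm) - u := by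
    intro u v h
    have h1 : (v - u) * (t + (u + v) * nm) = 0 := by
      rw [hFdef] at h; linear_combination -h
    rcases mul_eq_zero.1 h1 with h2 | h2
    · left; exact sub_eq_zero.1 h2
    · right
      field_simp
      linear_combination h2
  -- subgroup setup
  set S : Set Lˣ := {x : Lˣ | ∃ u : Kˣ, (x : L) = 1 + ι u * σ} with hSdef
  set H : Subgroup Lˣ := Subgroup.closure S with hHdef
  set su : Kˣ → Lˣ := fun u => Units.mk0 (1 + ι u * σ) (hone u) with hsudef
  have hsu : ∀ u : Kˣ, su u ∈ H := fun u => Subgroup.subset_closure ⟨u, rfl⟩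
  set jm : Kˣ →* Lˣ := Units.map (ι : K →* L) with hjmdef
  set K₁ : Subgroup Kˣ := H.comap jm with hK₁def
  have hFmem : ∀ u : Kˣ, Units.mk0 (F u) (hF0 u) ∈ K₁ := by
    intro u
    have h1 : jm (Units.mk0 (F u) (hF0 u)) = (su u) ^ (q + 1) := by
      apply Units.ext
      push_cast [hjmdef, hsudef]
      exact (hnorm u).symm
    rw [Subgroup.mem_comap, h1]
    exact pow_mem (hsu u) _
  have hcardKu : Nat.card Kˣ = q - 1 := by
    rw [Nat.card_eq_fintype_card, Fintype.card_units, hqdef]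
  -- Stage A : K₁ = ⊤
  have hK1 : K₁ = ⊤ := by
    by_contra hK1top
    have hdvd : Nat.card K₁ ∣ q - 1 := hcardKu ▸ Subgroup.card_subgroup_dvd_card K₁
    have hne : Nat.card K₁ ≠ q - 1 := by
      intro hcc
      exact hK1top (Subgroup.eq_top_of_card_eq _ (by rw [hcc, hcardKu]))
    obtain ⟨m, hm⟩ := hdvd
    have hcpos : 0 < Nat.card K₁ := Nat.card_pos
    have hm1 : m ≠ 1 := by intro h; rw [h, mul_one] at hm; omega
    have hm0 : m ≠ 0 := by intro h; rw [h, mul_zero] at hm; omega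
    set p2 : ℕ := m.minFac with hp2def
    have hp2 : p2.Prime := Nat.minFac_prime hm1
    set e : ℕ := (q - 1) / p2 with hedef
    have hp2dvd : p2 ∣ q - 1 := dvd_trans (Nat.minFac_dvd m) ⟨Nat.card K₁, by rw [hm]; ring⟩
    have hep : p2 * e = q - 1 := Nat.mul_div_cancel' hp2dvd
    have he1 : 1 ≤ e := by
      rcases Nat.eq_zero_or_pos e with h | h
      · rw [h, mul_zero] at hep; omega
      · exact h
    have hK1pow : ∀ x : Kˣ, x ∈ K₁ → x ^ e = 1 := by
      intro x hx
      have h1 : (⟨x, hx⟩ : K₁) ^ Nat.card K₁ = 1 := pow_card_eq_one'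
      have h2 : x ^ Nat.card K₁ = 1 := by
        have h3 := congrArg (Subtype.val) h1
        simp only [SubmonoidClass.coe_pow, OneMemClass.coe_one] at h3
        exact h3
      have hcd : Nat.card K₁ ∣ e := by
        refine ⟨m / p2, ?_⟩
        rw [hedef, hm, Nat.mul_div_assoc _ (Nat.minFac_dvd m)]
      obtain ⟨r, hr⟩ := hcd
      rw [hr, pow_mul, h2, one_pow]
    have hFe : ∀ u : K, u ≠ 0 → (F u) ^ e = 1 := by
      intro u hu
      have h1 := hK1pow _ (hFmem (Units.mk0 u hu))
      have := congrArg Units.val h1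
      simpa using this
    -- counting distinct values of F
    set sK : Finset K := Finset.univ.erase 0 with hsKdef
    have hsKcard : sK.card = q - 1 := by
      rw [hsKdef, Finset.card_erase_of_mem (Finset.mem_univ 0), Finset.card_univ]
    set T : Finset K := sK.image F with hTdef
    have hTcard : T.card ≤ e := by
      have hTsub : T ⊆ (Polynomial.nthRoots e (1 : K)).toFinset := by
        intro b hb
        obtain ⟨u, hu, rfl⟩ := Finset.mem_image.1 hb
        rw [Multiset.mem_toFinset, Polynomial.mem_nthRoots (by omega)]
        exact hFe u (Finset.ne_of_mem_erase hu)
      calc T.card ≤ _ := Finset.card_le_card hTsub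
        _ ≤ e := le_trans (Multiset.toFinset_card_le _) (Polynomial.card_nthRoots e 1)
    have hq1T : q - 1 ≤ 2 * T.card := by
      rw [← hsKcard, hTdef]
      apply Finset.card_le_mul_card_image
      intro b hb
      obtain ⟨u0, hu0, hu0b⟩ := Finset.mem_image.1 hb
      have hsub : sK.filter (fun a => F a = b) ⊆ {u0, -(t / nm) - u0} := by
        intro a ha
        obtain ⟨_, ha2⟩ := Finset.mem_filter.1 ha
        rcases hF2 u0 a (by rw [ha2, hu0b]) with h | h
        · simp [h]
        · simp [h]
      calc (sK.filter (fun a => F a = b)).card ≤ _ := Finset.card_le_card hsub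
        _ ≤ 2 := by
            apply le_trans (Finset.card_insert_le _ _)
            simp
    have hp22 : p2 = 2 := by
      by_contra hne2
      have h3 : 3 ≤ p2 := by have := hp2.two_le; omega
      have h4 : 3 * e ≤ p2 * e := Nat.mul_le_mul_right e h3
      omega
    have h2e : 2 * e = q - 1 := by rw [← hp22]; exact hep
    have hqodd : q % 2 = 1 := by omega
    have hchar2 : ringChar K ≠ 2 := by
      intro hc
      have h1 := (FiniteField.even_card_iff_char_two).1 hc
      rw [← hqdef] at h1
      omega
    have hsq : ∀ u : K, IsSquare (F u) := by
      intro u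
      rcases eq_or_ne u 0 with rfl | hu
      · have h1 : F 0 = 1 := by rw [hFdef]; ring
        rw [h1]; exact IsSquare.one
      · rw [FiniteField.isSquare_iff hchar2 (hF0 u)]
        have h1 : Fintype.card K / 2 = e := by rw [← hqdef]; omega
        -- uses h2e
        rw [h1]
        exact hFe u hu
    obtain ⟨c, hc⟩ := FiniteField.exists_nonsquare (F := K) hchar2
    have hc0 : c ≠ 0 := fun h => hc (by rw [h]; exact ⟨0, by ring⟩)
    -- cyclic group argument
    obtain ⟨g, hg⟩ := IsCyclic.exists_generator (α := Lˣ)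
    have hcardLu : Nat.card Lˣ = q ^ 2 - 1 := by
      rw [Nat.card_eq_fintype_card, Fintype.card_units, hcardL]
    have hog : orderOf g = q ^ 2 - 1 := by
      rw [orderOf_eq_card_of_forall_mem_zpowers hg, hcardLu]
    have hqq : (q + 1) * (q - 1) = q ^ 2 - 1 := by
      have hgen : ∀ r : ℕ, 2 ≤ r → (r + 1) * (r - 1) = r ^ 2 - 1 := by
        rintro (_ | _ | r) hr
        · omega
        · omega
        · have h2 : r + 1 + 1 - 1 = r + 1 := rfl
          rw [h2]
          have h3 : (r + 1 + 1 + 1) * (r + 1) = r * r + 4 * r + 3 := by ring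
          have h4 : (r + 1 + 1) ^ 2 = r * r + 4 * r + 4 := by ring
          omega
      exact hgen q hq2
    set y : Lˣ := jm (Units.mk0 c hc0) with hydef
    have hyq : y ^ (q - 1) = 1 := by
      have h1 : (Units.mk0 c hc0) ^ (q - 1) = 1 := by
        rw [← hcardKu]; exact pow_card_eq_one'
      rw [hydef, ← map_pow, h1, map_one]
    obtain ⟨k, hk0⟩ := (mem_powers_iff_mem_zpowers).2 (hg y)
    have hk : g ^ k = y := hk0
    have hdvd1 : q ^ 2 - 1 ∣ k * (q - 1) := by
      rw [← hog]
      apply orderOf_dvd_of_pow_eq_one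
      rw [pow_mul, hk, hyq]
    have hdvd2 : (q + 1) ∣ k := by
      rw [← hqq] at hdvd1
      exact (Nat.mul_dvd_mul_iff_right (by omega : 0 < q - 1)).1 hdvd1
    set x0 : Lˣ := g ^ (k / (q + 1)) with hx0def
    have hx0 : x0 ^ (q + 1) = y := by
      rw [hx0def, ← pow_mul, Nat.div_mul_cancel hdvd2, hk]
    set Sol : Finset Lˣ := Finset.univ.filter (fun x => x ^ (q + 1) = y) with hSoldef
    have hgN : g ^ (q ^ 2 - 1) = 1 := by rw [← hog, pow_orderOf_eq_one]
    have hSolcard : q + 1 ≤ Sol.card := by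
      have h0 : (Finset.range (q + 1)).card = q + 1 := Finset.card_range _
      rw [← h0]
      apply Finset.card_le_card_of_injOn (fun j => x0 * g ^ (j * (q - 1)))
      · intro j hj
        rw [hSoldef, Finset.mem_coe, Finset.mem_filter]
        refine ⟨Finset.mem_univ _, ?_⟩
        rw [mul_pow, hx0, ← pow_mul]
        have h1 : j * (q - 1) * (q + 1) = (q ^ 2 - 1) * j := by
          rw [← hqq]; ring
        rw [h1, pow_mul, hgN, one_pow, mul_one]
      · intro j1 hj1 j2 hj2 hje
        simp only [Finset.coe_range, Set.mem_Iio] at hj1 hj2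
        have h1 : g ^ (j1 * (q - 1)) = g ^ (j2 * (q - 1)) := mul_left_cancel hje
        have hb : ∀ j : ℕ, j < q + 1 → j * (q - 1) < orderOf g := by
          intro j hj
          rw [hog]
          have h2 : j * (q - 1) ≤ q * (q - 1) := Nat.mul_le_mul_right _ (by omega)
          have h3 : (q + 1) * (q - 1) = q * (q - 1) + (q - 1) := by ring
          omega
        have := pow_injOn_Iio_orderOf (hb j1 hj1) (hb j2 hj2) h1
        have hq10 : 0 < q - 1 := by omega
        exact Nat.eq_of_mul_eq_mul_right hq10 this
    -- bad solutions lie on the line ι b * σ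
    have hSolBad : ∃ x ∈ Sol, ¬∃ b : K, (x : L) = ι b * σ := by
      by_contra hall
      push_neg at hall
      have hcard : Sol.card ≤ q - 1 := by
        have h1 : Sol.card ≤ (Finset.univ.erase (0 : K)).card := by
          set pick : Lˣ → K :=
            fun x => if hx : ∃ b : K, (x : L) = ι b * σ then hx.choose else 0 with hpickdef
          refine Finset.card_le_card_of_injOn pick ?_ ?_
          · intro x hx
            have hx2 := hall x hx
            have hpx : pick x = hx2.choose := dif_pos hx2
            rw [hpx]
            have hspec := hx2.choose_spec
            rw [Finset.mem_coe, Finset.mem_erase]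
            refine ⟨?_, Finset.mem_univ _⟩
            intro h0
            apply Units.ne_zero x
            rw [hspec, h0, map_zero, zero_mul]
          · intro x1 hx1 x2 hx2 hfe
            have h1 := hall x1 (by simpa using hx1)
            have h2 := hall x2 (by simpa using hx2)
            rw [show pick x1 = h1.choose from dif_pos h1,
              show pick x2 = h2.choose from dif_pos h2] at hfe
            apply Units.ext
            rw [h1.choose_spec, h2.choose_spec, hfe]
        have h2 : (Finset.univ.erase (0 : K)).card = q - 1 := by
          rw [Finset.card_erase_of_mem (Finset.mem_univ 0), Finset.card_univ]
        omega
      omega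
    obtain ⟨x, hxSol, hxB⟩ := hSolBad
    -- decompose x in the basis 1, σ
    have hspan : ∀ z : L, ∃ a b : K, z = ι a + ι b * σ := by
      have hli : LinearIndependent K ![(1 : L), σ] := by
        rw [LinearIndependent.pair_iff]
        intro s r hsr
        have hsr' : ι s + ι r * σ = 0 := by
          rw [Algebra.smul_def, Algebra.smul_def, mul_one] at hsr
          exact hsr
        by_cases hr : r = 0
        · subst hr
          rw [map_zero, zero_mul, add_zero] at hsr'
          exact ⟨hinj (by rw [hsr', map_zero]), rfl⟩
        · exfalso
          have hιr : ι r ≠ 0 := fun h0 => hr (hinj (by rw [h0, map_zero]))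
          refine hσ ⟨-(r⁻¹ * s), ?_⟩
          rw [map_neg, map_mul, map_inv₀]
          field_simp
          linear_combination -hsr'
      have hsp : Submodule.span K {(1 : L), σ} = ⊤ := by
        apply Submodule.eq_top_of_finrank_eq
        rw [hdim]
        have hrg : ({(1 : L), σ} : Set L) = Set.range ![(1 : L), σ] := by
          ext z
          simp [Matrix.range_cons, Matrix.range_empty, or_comm]
        rw [hrg, finrank_span_eq_card hli, Fintype.card_fin]
      intro z
      have hz : z ∈ Submodule.span K {(1 : L), σ} := hsp ▸ Submodule.mem_top
      obtain ⟨a, b, hab⟩ := Submodule.mem_span_pair.1 hz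
      refine ⟨a, b, ?_⟩
      rw [← hab, Algebra.smul_def, Algebra.smul_def, mul_one]
    obtain ⟨a, b, hab⟩ := hspan (x : L)
    have ha0 : a ≠ 0 := by
      intro h
      exact hxB ⟨b, by rw [hab, h, map_zero, zero_add]⟩
    have hval : ((x : L)) ^ (q + 1) = ι c := by
      have h1 := (Finset.mem_filter.1 hxSol).2
      have h2 := congrArg Units.val h1
      rw [Units.val_pow_eq_pow_val] at h2
      rw [h2, hydef]
      rfl
    have hfac : (x : L) = ι a * (1 + ι (a⁻¹ * b) * σ) := by
      rw [hab, map_mul, map_inv₀]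
      have hιa : ι a ≠ 0 := fun h0 => ha0 (hinj (by rw [h0, map_zero]))
      field_simp
    have hceq : ι c = ι (a * a * F (a⁻¹ * b)) := by
      rw [← hval, hfac, mul_pow, hnorm]
      have h1 : (ι a) ^ (q + 1) = ι (a * a) := by
        rw [pow_succ, hrfwd, map_mul]
      rw [h1, ← map_mul]
    have hc2 : c = a * a * F (a⁻¹ * b) := hinj hceq
    apply hc
    rw [hc2]
    exact (IsSquare.mul ⟨a, by ring⟩ (hsq _))
  -- Stage B : conclude
  have hjm : ∀ v : Kˣ, jm v ∈ H := by
    intro v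
    have hv : v ∈ K₁ := by rw [hK1]; trivial
    exact hv
  have hspan : ∀ z : L, ∃ a b : K, z = ι a + ι b * σ := by
    have hli : LinearIndependent K ![(1 : L), σ] := by
      rw [LinearIndependent.pair_iff]
      intro s r hsr
      have hsr' : ι s + ι r * σ = 0 := by
        rw [Algebra.smul_def, Algebra.smul_def, mul_one] at hsr
        exact hsr
      by_cases hr : r = 0
      · subst hr
        rw [map_zero, zero_mul, add_zero] at hsr'
        exact ⟨hinj (by rw [hsr', map_zero]), rfl⟩
      · exfalso
        have hιr : ι r ≠ 0 := fun h0 => hr (hinj (by rw [h0, map_zero]))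
        refine hσ ⟨-(r⁻¹ * s), ?_⟩
        rw [map_neg, map_mul, map_inv₀]
        field_simp
        linear_combination -hsr'
    have hsp : Submodule.span K {(1 : L), σ} = ⊤ := by
      apply Submodule.eq_top_of_finrank_eq
      rw [hdim]
      have hrg : ({(1 : L), σ} : Set L) = Set.range ![(1 : L), σ] := by
        ext z
        simp [Matrix.range_cons, Matrix.range_empty, or_comm]
      rw [hrg, finrank_span_eq_card hli, Fintype.card_fin]
    intro z
    have hz : z ∈ Submodule.span K {(1 : L), σ} := hsp ▸ Submodule.mem_top
    obtain ⟨a, b, hab⟩ := Submodule.mem_span_pair.1 hz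
    refine ⟨a, b, ?_⟩
    rw [← hab, Algebra.smul_def, Algebra.smul_def, mul_one]
  refine (Subgroup.eq_top_iff' H).2 fun x => ?_
  obtain ⟨a, b, hab⟩ := hspan (x : L)
  rcases eq_or_ne b 0 with rfl | hb
  · have ha : a ≠ 0 := by
      intro h
      apply Units.ne_zero x
      rw [hab, h, map_zero, zero_mul, add_zero]
    have hx : x = jm (Units.mk0 a ha) := by
      apply Units.ext
      rw [hab, map_zero, zero_mul, add_zero]
      rfl
    rw [hx]; exact hjm _
  · rcases eq_or_ne a 0 with rfl | ha
    · -- x = ι b * σ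
      have hσ2 : σ ^ 2 = ι t * σ - ι nm := by rw [ht, hnm]; ring
      set w : K := nm⁻¹ * (1 + t + nm) with hwdef
      have hF1 : F 1 = 1 + t + nm := by rw [hFdef]; ring
      have hw0 : w ≠ 0 := by
        apply mul_ne_zero (inv_ne_zero hnm0)
        rw [← hF1]; exact hF0 1
      have hprod : (1 + ι ((1 : Kˣ) : K) * σ) * (1 + ι ((Units.mk0 nm⁻¹ (inv_ne_zero hnm0) : Kˣ) : K) * σ) = ι w * σ := by
        have h1 : ((1 : Kˣ) : K) = (1 : K) := rfl
        have h2 : ((Units.mk0 nm⁻¹ (inv_ne_zero hnm0) : Kˣ) : K) = nm⁻¹ := rfl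
        rw [h1, h2, map_one, one_mul, hwdef, map_mul, map_inv₀, map_add, map_add, map_one]
        have hinv : (ι nm)⁻¹ * ι nm = 1 := inv_mul_cancel₀ hιnm
        field_simp
        linear_combination hσ2
      have hιw : ι w ≠ 0 := fun h0 => hw0 (hinj (by rw [h0, map_zero]))
      have hx : x = jm (Units.mk0 (b * w⁻¹) (mul_ne_zero hb (inv_ne_zero hw0))) *
          (su 1 * su (Units.mk0 nm⁻¹ (inv_ne_zero hnm0))) := by
        apply Units.ext
        have hval1 : Units.val (jm (Units.mk0 (b * w⁻¹) (mul_ne_zero hb (inv_ne_zero hw0))) *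
            (su 1 * su (Units.mk0 nm⁻¹ (inv_ne_zero hnm0))))
            = ι (b * w⁻¹) * ((1 + ι ((1 : Kˣ) : K) * σ) *
              (1 + ι ((Units.mk0 nm⁻¹ (inv_ne_zero hnm0) : Kˣ) : K) * σ)) := rfl
        rw [hval1, hprod, hab, map_zero, zero_add, map_mul, map_inv₀]
        field_simp
      rw [hx]
      exact mul_mem (hjm _) (mul_mem (hsu 1) (hsu _))
    · have hx : x = jm (Units.mk0 a ha) * su (Units.mk0 (a⁻¹ * b) (mul_ne_zero (inv_ne_zero ha) hb)) := by
        apply Units.ext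
        have hval1 : Units.val (jm (Units.mk0 a ha) * su (Units.mk0 (a⁻¹ * b)
            (mul_ne_zero (inv_ne_zero ha) hb)))
            = ι a * (1 + ι (a⁻¹ * b) * σ) := rfl
        rw [hval1, hab, map_mul, map_inv₀]
        have hιa : ι a ≠ 0 := fun h0 => ha (hinj (by rw [h0, map_zero]))
        field_simp
      rw [hx]
      exact mul_mem (hjm _) (hsu _)
end

section
/- For any integer k, every row of the matrix β_f^k has at most two nonzero entries; moreover if a row r has two nonzero entries in columns i and j, then |i - j| = N. -/
open Matrix

section Aux

variable {F : Type*} [Field F] {N : ℕ}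

/-- general shape of βf -/
def shapeL (N : ℕ) (a b : F) : Matrix (Fin (2 * N)) (Fin (2 * N)) F :=
  Matrix.of fun i j =>
    if i.val = 0 ∧ j.val = 2 * N - 1 then a
    else if i.val = N ∧ j.val = 2 * N - 1 then b
    else if i.val = j.val + 1 then 1 else 0

/-- general shape of βf⁻¹ -/
def shapeR (N : ℕ) (a b : F) : Matrix (Fin (2 * N)) (Fin (2 * N)) F :=
  Matrix.of fun i j =>
    if i.val = 2 * N - 1 ∧ j.val = 0 then a
    else if i.val = N - 1 ∧ j.val = 0 then b
    else if i.val + 1 = j.val then 1 else 0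

lemma sum_two {m : ℕ} (f : Fin m → F) (i0 iN : Fin m) (h : i0 ≠ iN) (a b : F) :
    ∑ l, f l * (if l = i0 then a else if l = iN then b else 0) = f i0 * a + f iN * b := by
  have key : ∀ l, f l * (if l = i0 then a else if l = iN then b else 0)
      = (if l = i0 then f i0 * a else 0) + (if l = iN then f iN * b else 0) := by
    intro l
    rcases eq_or_ne l i0 with rfl | h0
    · simp [h]
    rcases eq_or_ne l iN with rfl | hn
    · simp [h0]
    · simp [h0, hn]
  rw [Finset.sum_congr rfl fun l _ => key l, Finset.sum_add_distrib,
    Finset.sum_ite_eq' _ i0, Finset.sum_ite_eq' _ iN]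
  simp

lemma sum_one {m : ℕ} (f : Fin m → F) (i0 : Fin m) (a : F) :
    ∑ l, f l * (if l = i0 then a else 0) = f i0 * a := by
  have key : ∀ l, f l * (if l = i0 then a else 0) = if l = i0 then f i0 * a else 0 := by
    intro l
    rcases eq_or_ne l i0 with rfl | h0
    · simp
    · simp [h0]
  rw [Finset.sum_congr rfl fun l _ => key l, Finset.sum_ite_eq' _ i0]
  simp

lemma mulL_last (hN : 2 ≤ N) (a b : F) (A : Matrix (Fin (2 * N)) (Fin (2 * N)) F)
    (r : Fin (2 * N)) (j : Fin (2 * N)) (hj : j.val = 2 * N - 1) :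
    (A * shapeL N a b) r j = A r ⟨0, by omega⟩ * a + A r ⟨N, by omega⟩ * b := by
  rw [mul_apply]
  have : ∀ l : Fin (2 * N), shapeL N a b l j =
      (if l = (⟨0, by omega⟩ : Fin (2 * N)) then a
       else if l = (⟨N, by omega⟩ : Fin (2 * N)) then b else 0) := by
    intro l
    simp only [shapeL, Matrix.of_apply, Fin.ext_iff, Fin.val_mk, and_true, true_and]
    have hl := l.isLt
    split_ifs <;> first | rfl | omega
  rw [Finset.sum_congr rfl fun l _ => by rw [this l]]
  exact sum_two _ _ _ (by simp [Fin.ext_iff]; omega) a b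

lemma mulL_other (hN : 2 ≤ N) (a b : F) (A : Matrix (Fin (2 * N)) (Fin (2 * N)) F)
    (r : Fin (2 * N)) (j : Fin (2 * N)) (hj : j.val ≠ 2 * N - 1) :
    (A * shapeL N a b) r j = A r ⟨j.val + 1, by have := j.isLt; omega⟩ := by
  rw [mul_apply]
  have : ∀ l : Fin (2 * N), shapeL N a b l j =
      (if l = (⟨j.val + 1, by have := j.isLt; omega⟩ : Fin (2 * N)) then (1 : F) else 0) := by
    intro l
    simp only [shapeL, Matrix.of_apply, Fin.ext_iff, Fin.val_mk, and_true, true_and]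
    have hl := l.isLt
    split_ifs <;> first | rfl | omega
  rw [Finset.sum_congr rfl fun l _ => by rw [this l], sum_one, mul_one]

lemma mulR_zero (hN : 2 ≤ N) (a b : F) (A : Matrix (Fin (2 * N)) (Fin (2 * N)) F)
    (r : Fin (2 * N)) (j : Fin (2 * N)) (hj : j.val = 0) :
    (A * shapeR N a b) r j = A r ⟨2 * N - 1, by omega⟩ * a + A r ⟨N - 1, by omega⟩ * b := by
  rw [mul_apply]
  have : ∀ l : Fin (2 * N), shapeR N a b l j =
      (if l = (⟨2 * N - 1, by omega⟩ : Fin (2 * N)) then a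
       else if l = (⟨N - 1, by omega⟩ : Fin (2 * N)) then b else 0) := by
    intro l
    simp only [shapeR, Matrix.of_apply, Fin.ext_iff, Fin.val_mk, and_true, true_and]
    have hl := l.isLt
    split_ifs <;> first | rfl | omega
  rw [Finset.sum_congr rfl fun l _ => by rw [this l]]
  exact sum_two _ _ _ (by simp [Fin.ext_iff]; omega) a b

lemma mulR_other (hN : 2 ≤ N) (a b : F) (A : Matrix (Fin (2 * N)) (Fin (2 * N)) F)
    (r : Fin (2 * N)) (j : Fin (2 * N)) (hj : j.val ≠ 0) :
    (A * shapeR N a b) r j = A r ⟨j.val - 1, by have := j.isLt; omega⟩ := by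
  rw [mul_apply]
  have : ∀ l : Fin (2 * N), shapeR N a b l j =
      (if l = (⟨j.val - 1, by have := j.isLt; omega⟩ : Fin (2 * N)) then (1 : F) else 0) := by
    intro l
    simp only [shapeR, Matrix.of_apply, Fin.ext_iff, Fin.val_mk, and_true, true_and]
    have hj' := j.isLt
    have hl := l.isLt
    split_ifs <;> first | rfl | omega
  rw [Finset.sum_congr rfl fun l _ => by rw [this l], sum_one, mul_one]

/-- The row-support invariant. -/
def Qrow (N : ℕ) (A : Matrix (Fin (2 * N)) (Fin (2 * N)) F) : Prop :=
  ∀ r : Fin (2 * N), ∃ s : ℕ, s < N ∧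
    ∀ j : Fin (2 * N), A r j ≠ 0 → j.val = s ∨ j.val = s + N

lemma Qrow_one (hN : 2 ≤ N) : Qrow N (1 : Matrix (Fin (2 * N)) (Fin (2 * N)) F) := by
  intro r
  refine ⟨if r.val < N then r.val else r.val - N, by have := r.isLt; split <;> omega, ?_⟩
  intro j hj
  have hrj : r = j := by
    by_contra h
    exact hj (Matrix.one_apply_ne h)
  subst hrj
  have := r.isLt
  split <;> omega

lemma Qrow_mulL (hN : 2 ≤ N) (a b : F) (A : Matrix (Fin (2 * N)) (Fin (2 * N)) F)
    (hA : Qrow N A) : Qrow N (A * shapeL N a b) := by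
  intro r
  obtain ⟨s, hs, hsupp⟩ := hA r
  refine ⟨if s = 0 then N - 1 else s - 1, by split <;> omega, ?_⟩
  intro j hj
  rcases eq_or_ne j.val (2 * N - 1) with hjl | hjl
  · rw [mulL_last hN a b A r j hjl] at hj
    have h0 : A r ⟨0, by omega⟩ ≠ 0 ∨ A r ⟨N, by omega⟩ ≠ 0 := by
      by_contra h
      push_neg at h
      rw [h.1, h.2] at hj
      simp at hj
    have hs0 : s = 0 := by
      rcases h0 with h | h
      · have := hsupp _ h; simp at this; omega
      · have := hsupp _ h; simp at this; omega
    subst hs0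
    split <;> omega
  · rw [mulL_other hN a b A r j hjl] at hj
    have h2 := hsupp _ hj
    simp only [Fin.val_mk] at h2
    have := j.isLt
    split <;> omega

lemma Qrow_mulR (hN : 2 ≤ N) (a b : F) (A : Matrix (Fin (2 * N)) (Fin (2 * N)) F)
    (hA : Qrow N A) : Qrow N (A * shapeR N a b) := by
  intro r
  obtain ⟨s, hs, hsupp⟩ := hA r
  refine ⟨if s = N - 1 then 0 else s + 1, by split <;> omega, ?_⟩
  intro j hj
  rcases eq_or_ne j.val 0 with hjl | hjl
  · rw [mulR_zero hN a b A r j hjl] at hj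
    have h0 : A r ⟨2 * N - 1, by omega⟩ ≠ 0 ∨ A r ⟨N - 1, by omega⟩ ≠ 0 := by
      by_contra h
      push_neg at h
      rw [h.1, h.2] at hj
      simp at hj
    have hs0 : s = N - 1 := by
      rcases h0 with h | h
      · have := hsupp _ h; simp at this; omega
      · have := hsupp _ h; simp at this; omega
    subst hs0
    split <;> omega
  · rw [mulR_other hN a b A r j hjl] at hj
    have h2 := hsupp _ hj
    simp only [Fin.val_mk] at h2
    have := j.isLt
    split <;> omega

lemma shapeL_mul_shapeR (hN : 2 ≤ N) (a b a' b' : F)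
    (hab : a * a' = 1) (hbb : b * a' + b' = 0) :
    shapeL N a b * shapeR N a' b' = 1 := by
  ext i j
  rcases eq_or_ne j.val 0 with hj | hj
  · rw [mulR_zero hN a' b' _ i j hj]
    have e1 : shapeL N a b i ⟨2 * N - 1, by omega⟩ =
        if i.val = 0 then a else if i.val = N then b else 0 := by
      simp only [shapeL, Matrix.of_apply, Fin.val_mk, and_true, true_and]
      have := i.isLt
      split_ifs <;> first | rfl | omega
    have e2 : shapeL N a b i ⟨N - 1, by omega⟩ = if i.val = N then 1 else 0 := by
      simp only [shapeL, Matrix.of_apply, Fin.val_mk, and_true, true_and]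
      have := i.isLt
      split_ifs <;> first | rfl | omega
    rw [e1, e2]
    rcases eq_or_ne i.val 0 with hi | hi
    · rw [if_pos hi, if_neg (by omega)]
      have hij : i = j := by simp [Fin.ext_iff]; omega
      rw [hij, Matrix.one_apply_eq]
      rw [zero_mul, add_zero, hab]
    · rw [if_neg hi]
      have : (1 : Matrix (Fin (2 * N)) (Fin (2 * N)) F) i j = 0 :=
        Matrix.one_apply_ne (by simp [Fin.ext_iff]; omega)
      rw [this]
      rcases eq_or_ne i.val N with hiN | hiN
      · rw [if_pos hiN, if_pos hiN, one_mul]; exact hbb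
      · rw [if_neg hiN, if_neg hiN]; ring
  · rw [mulR_other hN a' b' _ i j hj]
    have e : shapeL N a b i ⟨j.val - 1, by have := j.isLt; omega⟩ =
        if i.val = j.val then 1 else 0 := by
      simp only [shapeL, Matrix.of_apply, Fin.val_mk, and_true, true_and]
      have := j.isLt
      split_ifs <;> first | rfl | omega
    rw [e]
    rcases eq_or_ne i j with rfl | hij
    · rw [if_pos rfl, Matrix.one_apply_eq]
    · rw [if_neg (by simpa [Fin.ext_iff] using hij), Matrix.one_apply_ne hij]

lemma pow_mul_pow_eq_one' {M : Type*} [Monoid M] {x y : M} (h : x * y = 1) (h' : y * x = 1)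
    (n : ℕ) : x ^ n * y ^ n = 1 := by
  induction n with
  | zero => simp
  | succ n ih =>
    rw [pow_succ x, pow_succ' y, mul_assoc, ← mul_assoc x, h, one_mul, ih]

end Aux

/-- For any integer `k`, every row of `β_f^k` has at most two nonzero entries, and if
a row `r` has two (distinct) nonzero entries in columns `i` and `j`, then `|i - j| = N`. -/
theorem stmt13 (O F : Type*) [CommRing O] [IsDomain O] [IsDiscreteValuationRing O]
    [Field F] [Algebra O F] [IsFractionRing O F]
    (ϖ : O) (hϖ : Irreducible ϖ) (c d : O) (hc : IsUnit c)
    (N : ℕ) (hN : 2 ≤ N)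
    (βf : Matrix (Fin (2 * N)) (Fin (2 * N)) F)
    (hβf : βf = Matrix.of fun i j =>
      if i.val = 0 ∧ j.val = 2 * N - 1 then
        algebraMap O F c * ((algebraMap O F ϖ)⁻¹) ^ 2
      else if i.val = N ∧ j.val = 2 * N - 1 then
        algebraMap O F d * (algebraMap O F ϖ)⁻¹
      else if i.val = j.val + 1 then 1 else 0) :
    ∀ k : ℤ, ∀ r : Fin (2 * N),
      {j : Fin (2 * N) | (βf ^ k) r j ≠ 0}.ncard ≤ 2 ∧
      ∀ i j : Fin (2 * N), (βf ^ k) r i ≠ 0 → (βf ^ k) r j ≠ 0 → i ≠ j →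
        |(i : ℤ) - (j : ℤ)| = N := by
  -- abbreviations
  set c' : F := algebraMap O F c with hc'
  set d' : F := algebraMap O F d with hd'
  set ϖ' : F := algebraMap O F ϖ with hϖ'
  have hϖ0 : ϖ' ≠ 0 := by
    rw [hϖ']
    exact (map_ne_zero_iff _ (IsFractionRing.injective O F)).2 hϖ.ne_zero
  have hc0 : c' ≠ 0 := by
    rw [hc']
    exact (map_ne_zero_iff _ (IsFractionRing.injective O F)).2 hc.ne_zero
  set a : F := c' * (ϖ'⁻¹) ^ 2 with ha
  set b : F := d' * ϖ'⁻¹ with hb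
  set a' : F := c'⁻¹ * ϖ' ^ 2 with ha'
  set b' : F := -(c'⁻¹ * d' * ϖ') with hb'
  have hβ : βf = shapeL N a b := hβf
  set γ : Matrix (Fin (2 * N)) (Fin (2 * N)) F := shapeR N a' b' with hγ
  have hmul : βf * γ = 1 := by
    rw [hβ, hγ]
    refine shapeL_mul_shapeR hN a b a' b' ?_ ?_
    · rw [ha, ha']; field_simp
    · rw [hb, ha', hb']; field_simp; ring
  have hmul' : γ * βf = 1 := mul_eq_one_comm.mp hmul
  -- Qrow for all integer powers
  have key : ∀ k : ℤ, Qrow N (βf ^ k) := by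
    intro k
    have hpos : ∀ n : ℕ, Qrow N (βf ^ n) := by
      intro n
      induction n with
      | zero => simpa using Qrow_one (F := F) hN
      | succ n ih =>
        rw [pow_succ, hβ]
        exact Qrow_mulL hN a b _ (hβ ▸ ih)
    have hneg : ∀ n : ℕ, Qrow N (γ ^ n) := by
      intro n
      induction n with
      | zero => simpa using Qrow_one (F := F) hN
      | succ n ih =>
        rw [pow_succ, hγ]
        exact Qrow_mulR hN a' b' _ (hγ ▸ ih)
    cases k with
    | ofNat n => rw [Int.ofNat_eq_coe, zpow_natCast]; exact hpos n
    | negSucc n =>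
      rw [zpow_negSucc]
      have : (βf ^ (n + 1))⁻¹ = γ ^ (n + 1) :=
        Matrix.inv_eq_right_inv (pow_mul_pow_eq_one' hmul hmul' (n + 1))
      rw [this]
      exact hneg (n + 1)
  intro k r
  obtain ⟨s, hs, hsupp⟩ := key k r
  constructor
  · have hsub : {j : Fin (2 * N) | (βf ^ k) r j ≠ 0} ⊆
        {(⟨s, by omega⟩ : Fin (2 * N)), ⟨s + N, by omega⟩} := by
      intro j hj
      rcases hsupp j hj with h | h
      · left; exact Fin.ext h
      · right; exact Fin.ext h
    calc {j : Fin (2 * N) | (βf ^ k) r j ≠ 0}.ncard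
        ≤ ({(⟨s, by omega⟩ : Fin (2 * N)), ⟨s + N, by omega⟩} : Set (Fin (2 * N))).ncard :=
          Set.ncard_le_ncard hsub (Set.toFinite _)
      _ ≤ 2 := by
          refine le_trans (Set.ncard_insert_le _ _) ?_
          simp
  · intro i j hi hj hij
    have h1 := hsupp i hi
    have h2 := hsupp j hj
    have hne : i.val ≠ j.val := fun h => hij (Fin.ext h)
    have : (i : ℤ) - (j : ℤ) = N ∨ (i : ℤ) - (j : ℤ) = -N := by
      have e1 : (i : ℤ) = (i.val : ℤ) := rfl
      have e2 : (j : ℤ) = (j.val : ℤ) := rfl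
      rw [e1, e2]
      omega
    rcases this with h | h <;> rw [h] <;> simp
end

section
/- Let F be a nonarchimedean local field with residue field k_F, and let f₁ = X² − d₁X − c₁ and f₂ = X² − d₂X − c₂ in O_F[X] both reduce to the same irreducible polynomial f̄ over k_F (so c₁ ≡ c₂ and d₁ ≡ d₂ mod P_F). Let β_{f₁}, β_{f₂} be the corresponding 2N×2N matrices of the middle supercuspidal construction. Then β_{f₁} β_{f₂}^{-1} ∈ I_{2N} + 𝔓, where 𝔓 is the Jacobson radical of the order 𝔄 (i.e. β_{f₁} β_{f₂}^{-1} lies in the principal congruence subgroup U¹(𝔄)). -/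
set_option maxHeartbeats 1000000

open Polynomial Matrix

def inPow (O F : Type*) [CommRing O] [Field F] [Algebra O F]
    (ϖ : O) (e : ℤ) (x : F) : Prop :=
  ∃ a : O, x = algebraMap O F a * (algebraMap O F ϖ) ^ e

def pexp (N : ℕ) (i j : Fin (2 * N)) : ℤ :=
  (if j.val % N ≤ i.val % N then 1 else 0) +
    (if i.val < N then 0 else 1) - (if j.val < N then 0 else 1)

def radP (O F : Type*) [CommRing O] [Field F] [Algebra O F] (ϖ : O) (N : ℕ) :
    Set (Matrix (Fin (2 * N)) (Fin (2 * N)) F) :=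
  {M | ∀ i j, inPow O F ϖ (pexp N i j) (M i j)}

/-- If `f₁ = X² - d₁X - c₁` and `f₂ = X² - d₂X - c₂` both reduce to the same
irreducible quadratic modulo `P_F` (i.e. `c₁ ≡ c₂` and `d₁ ≡ d₂ mod P_F`), then
`β_{f₁} β_{f₂}⁻¹ ∈ I + 𝔓`, i.e. it lies in the principal congruence subgroup `U¹(𝔄)`. -/
theorem stmt15 (O F : Type*) [CommRing O] [IsDomain O] [IsDiscreteValuationRing O]
    [Field F] [Algebra O F] [IsFractionRing O F]
    (ϖ : O) (hϖ : Irreducible ϖ) (c₁ d₁ c₂ d₂ : O)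
    (hf₁ : Irreducible ((X ^ 2 - C d₁ * X - C c₁).map (IsLocalRing.residue O)))
    (hf₂ : Irreducible ((X ^ 2 - C d₂ * X - C c₂).map (IsLocalRing.residue O)))
    (hcc : ∃ t : O, c₁ - c₂ = ϖ * t) (hdd : ∃ t : O, d₁ - d₂ = ϖ * t)
    (N : ℕ) (hN : 2 ≤ N)
    (βf₁ βf₂ : Matrix (Fin (2 * N)) (Fin (2 * N)) F)
    (hβf₁ : βf₁ = Matrix.of fun i j =>
      if i.val = 0 ∧ j.val = 2 * N - 1 then
        algebraMap O F c₁ * ((algebraMap O F ϖ)⁻¹) ^ 2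
      else if i.val = N ∧ j.val = 2 * N - 1 then
        algebraMap O F d₁ * (algebraMap O F ϖ)⁻¹
      else if i.val = j.val + 1 then 1 else 0)
    (hβf₂ : βf₂ = Matrix.of fun i j =>
      if i.val = 0 ∧ j.val = 2 * N - 1 then
        algebraMap O F c₂ * ((algebraMap O F ϖ)⁻¹) ^ 2
      else if i.val = N ∧ j.val = 2 * N - 1 then
        algebraMap O F d₂ * (algebraMap O F ϖ)⁻¹
      else if i.val = j.val + 1 then 1 else 0) :
    ∃ m ∈ radP O F ϖ N, βf₁ * βf₂⁻¹ = 1 + m := by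
  classical
  obtain ⟨tc, htc⟩ := hcc
  obtain ⟨td, htd⟩ := hdd
  -- c₂ is a unit
  have hc : IsUnit c₂ := by
    by_contra h
    have hmem : c₂ ∈ IsLocalRing.maximalIdeal O := h
    have hres : IsLocalRing.residue O c₂ = 0 := (Ideal.Quotient.eq_zero_iff_mem).2 hmem
    set p := (X ^ 2 - C d₂ * X - C c₂).map (IsLocalRing.residue O) with hp
    have hc0 : p.coeff 0 = 0 := by simp [hp, coeff_map, hres]
    obtain ⟨q, hq⟩ := Polynomial.X_dvd_iff.2 hc0
    rcases hf₂.isUnit_or_isUnit hq with h1 | h2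
    · exact Polynomial.not_isUnit_X h1
    · have hmonic : (X ^ 2 - C d₂ * X - C c₂).Monic := by monicity!
      have hdeg : p.natDegree = 2 := by
        rw [hp, hmonic.natDegree_map]; compute_degree!
      have hq0 : q.natDegree = 0 := Polynomial.natDegree_eq_zero_of_isUnit h2
      have hqne : q ≠ 0 := by rintro rfl; rw [mul_zero] at hq; rw [hq] at hdeg; simp at hdeg
      have := Polynomial.natDegree_mul (Polynomial.X_ne_zero) hqne
      rw [← hq, hdeg, natDegree_X, hq0] at this
      omega
  obtain ⟨u, hu⟩ := hc
  set π : F := algebraMap O F ϖ with hπdef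
  have hπ : π ≠ 0 := by
    rw [hπdef]
    simpa using (map_ne_zero_iff _ (IsFractionRing.injective O F)).2 hϖ.ne_zero
  have hinv : π⁻¹ * π = 1 := inv_mul_cancel₀ hπ
  set uI : F := algebraMap O F ((u⁻¹ : Oˣ) : O) with huI
  have hcu : algebraMap O F c₂ * uI = 1 := by
    rw [huI, ← hu, ← _root_.map_mul, Units.mul_inv, _root_.map_one]
  set m : Matrix (Fin (2 * N)) (Fin (2 * N)) F := Matrix.of fun i j =>
    if i.val = 0 ∧ j.val = 0 then algebraMap O F tc * uI * π
    else if i.val = N ∧ j.val = 0 then algebraMap O F td * uI * π ^ 2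
    else 0 with hm
  set B : Matrix (Fin (2 * N)) (Fin (2 * N)) F := Matrix.of fun i j =>
    if j.val = 0 then
      (if i.val = 2 * N - 1 then uI * π ^ 2
       else if i.val = N - 1 then -(algebraMap O F d₂ * uI * π) else 0)
    else if i.val + 1 = j.val then 1 else 0 with hB
  -- βf₂ * B = 1
  have hright : βf₂ * B = 1 := by
    ext i j
    rw [Matrix.mul_apply, Matrix.one_apply]
    by_cases hi0 : (i : ℕ) = 0
    · rw [Fintype.sum_eq_single (⟨2 * N - 1, by omega⟩ : Fin (2 * N)) ?side1]
      case side1 =>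
        intro b hb
        have hbv : (b : ℕ) ≠ 2 * N - 1 := fun h => hb (Fin.ext h)
        have hz : βf₂ i b = 0 := by
          simp only [hβf₂, Matrix.of_apply]
          split_ifs <;> first | rfl | omega
        rw [hz, zero_mul]
      simp only [hβf₂, hB, Matrix.of_apply, Fin.ext_iff, and_true, true_and]
      split_ifs <;> (try omega) <;> (try ring)
      linear_combination π ^ 2 * π⁻¹ ^ 2 * hcu + (π⁻¹ * π + 1) * hinv
    · by_cases hiN : (i : ℕ) = N
      · rw [Finset.sum_eq_add_of_mem (⟨N - 1, by omega⟩ : Fin (2 * N))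
          (⟨2 * N - 1, by omega⟩ : Fin (2 * N)) (Finset.mem_univ _) (Finset.mem_univ _)
          (by simp [Fin.ext_iff]; omega) ?side2]
        case side2 =>
          intro c _ hc2
          have hc1 : (c : ℕ) ≠ N - 1 := fun h => hc2.1 (Fin.ext h)
          have hc3 : (c : ℕ) ≠ 2 * N - 1 := fun h => hc2.2 (Fin.ext h)
          have hz : βf₂ i c = 0 := by
            simp only [hβf₂, Matrix.of_apply]
            split_ifs <;> first | rfl | omega
          rw [hz, zero_mul]
        simp only [hβf₂, hB, Matrix.of_apply, Fin.ext_iff, and_true, true_and]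
        split_ifs <;> (try omega) <;> (try ring)
        linear_combination algebraMap O F d₂ * uI * π * hinv
      · have hi1 : 1 ≤ (i : ℕ) := by omega
        rw [Fintype.sum_eq_single (⟨(i : ℕ) - 1, by omega⟩ : Fin (2 * N)) ?side3]
        case side3 =>
          intro b hb
          have hbv : (b : ℕ) ≠ (i : ℕ) - 1 := fun h => hb (Fin.ext h)
          have hz : βf₂ i b = 0 := by
            simp only [hβf₂, Matrix.of_apply]
            split_ifs <;> first | rfl | omega
          rw [hz, zero_mul]
        simp only [hβf₂, hB, Matrix.of_apply, Fin.ext_iff, and_true, true_and]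
        split_ifs <;> (try omega) <;> (try ring)
  have hc₁ : algebraMap O F c₁ = algebraMap O F c₂ + π * algebraMap O F tc := by
    have h : c₁ = c₂ + ϖ * tc := by rw [← htc]; ring
    rw [h, _root_.map_add, _root_.map_mul, hπdef]
  have hd₁ : algebraMap O F d₁ = algebraMap O F d₂ + π * algebraMap O F td := by
    have h : d₁ = d₂ + ϖ * td := by rw [← htd]; ring
    rw [h, _root_.map_add, _root_.map_mul, hπdef]
  have hfact : βf₁ = (1 + m) * βf₂ := by
    rw [Matrix.add_mul, Matrix.one_mul]
    ext i j
    rw [Matrix.add_apply, Matrix.mul_apply]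
    rw [Fintype.sum_eq_single (⟨0, by omega⟩ : Fin (2 * N)) ?side4]
    case side4 =>
      intro b hb
      have hbv : (b : ℕ) ≠ 0 := fun h => hb (Fin.ext h)
      have hz : m i b = 0 := by
        simp only [hm, Matrix.of_apply]
        split_ifs <;> first | rfl | omega
      rw [hz, zero_mul]
    simp only [hβf₁, hβf₂, hm, Matrix.of_apply, Fin.ext_iff, and_true, true_and]
    split_ifs <;> (try omega) <;> (try ring) <;> (try exact (‹False›).elim)
    · linear_combination π⁻¹ ^ 2 * hc₁ - π * π⁻¹ ^ 2 * algebraMap O F tc * hcu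
    · linear_combination π⁻¹ * hd₁ - algebraMap O F td * π ^ 2 * π⁻¹ ^ 2 * hcu
        - algebraMap O F td * π⁻¹ * π * hinv
  refine ⟨m, ?_, ?_⟩
  · intro i j
    simp only [hm, Matrix.of_apply]
    split_ifs with h1 h2
    · have hp : pexp N i j = 1 := by
        simp only [pexp, h1.1, h1.2, Nat.zero_mod]
        split_ifs <;> omega
      rw [hp]
      exact ⟨tc * ((u⁻¹ : Oˣ) : O), by rw [_root_.map_mul, zpow_one, huI]⟩
    · have hp : pexp N i j = 2 := by
        simp only [pexp, h2.1, h2.2, Nat.zero_mod, Nat.mod_self]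
        split_ifs <;> omega
      rw [hp]
      exact ⟨td * ((u⁻¹ : Oˣ) : O),
        by rw [_root_.map_mul, show (2 : ℤ) = ((2 : ℕ) : ℤ) from rfl, zpow_natCast, huI]⟩
    · exact ⟨0, by rw [_root_.map_zero, zero_mul]⟩
  · rw [Matrix.inv_eq_right_inv hright, hfact, Matrix.mul_assoc, hright, Matrix.mul_one]
end
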